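/- arXiv:2008.04503 — 4 statements merged into one kernel-verified Lean document; each statement's English description precedes it below -/
import Mathlib

section
/- Let F be a finite extension of Q_p with ring of integers O and uniformizer ϖ. Let G_{v0}(k) be the group of matrices in GL_2(O) congruent to the identity modulo ϖ^k, and G_{v1}(k) = diag(ϖ,1) · G_{v0}(k) · diag(ϖ,1)^{-1}. Then the group generated by G_{v0}(k) and G_{v1}(k) equals the set H of matrices [[1+ϖ^k a, ϖ^k b],[ϖ^{k-1} c, 1+ϖ^k d]] with a,b,c,d ∈ O. -/
open Matrix Pointwise
open scoped OnePoint

noncomputable section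

/-- `ϖ` is a uniformizer of the nonarchimedean field `F`. -/
def IsUniformizer (F : Type*) [NormedField F] (ϖ : F) : Prop :=
  ϖ ≠ 0 ∧ ‖ϖ‖ < 1 ∧ ∀ x : F, ‖x‖ < 1 → ‖x‖ ≤ ‖ϖ‖

/-- The principal congruence subgroup `G_{v₀}(k)` of level `k`: matrices in `GL₂(𝒪)`
congruent to the identity modulo `ϖ^k` (entrywise, each entry of `g - 1` lies in `ϖ^k 𝒪`,
i.e. has norm at most `‖ϖ‖^k`). -/
def Gv0 (F : Type*) [NormedField F] (ϖ : F) (k : ℕ) : Set (GL (Fin 2) F) :=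
  {g | ‖(g : Matrix (Fin 2) (Fin 2) F) 0 0 - 1‖ ≤ ‖ϖ‖ ^ k ∧
       ‖(g : Matrix (Fin 2) (Fin 2) F) 0 1‖ ≤ ‖ϖ‖ ^ k ∧
       ‖(g : Matrix (Fin 2) (Fin 2) F) 1 0‖ ≤ ‖ϖ‖ ^ k ∧
       ‖(g : Matrix (Fin 2) (Fin 2) F) 1 1 - 1‖ ≤ ‖ϖ‖ ^ k}

/-- The diagonal matrix `diag(ϖ, 1)` as an element of `GL₂(F)`. -/
def dmat (F : Type*) [Field F] (ϖ : F) (h : ϖ ≠ 0) : GL (Fin 2) F :=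
  Matrix.GeneralLinearGroup.mkOfDetNeZero !![ϖ, 0; 0, 1]
    (by simpa [Matrix.det_fin_two_of] using h)

/-- `G_{v₁}(k) = diag(ϖ,1) · G_{v₀}(k) · diag(ϖ,1)⁻¹`. -/
def Gv1 (F : Type*) [NormedField F] (ϖ : F) (h : ϖ ≠ 0) (k : ℕ) : Set (GL (Fin 2) F) :=
  (fun g => dmat F ϖ h * g * (dmat F ϖ h)⁻¹) '' Gv0 F ϖ k

/-- The explicit set `H` of matrices `[[1+ϖ^k a, ϖ^k b],[ϖ^{k-1} c, 1+ϖ^k d]]`, `a,b,c,d ∈ 𝒪`;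
this is the edge group `G_e(k)`. -/
def Ge (F : Type*) [NormedField F] (ϖ : F) (k : ℕ) : Set (GL (Fin 2) F) :=
  {g | ‖(g : Matrix (Fin 2) (Fin 2) F) 0 0 - 1‖ ≤ ‖ϖ‖ ^ k ∧
       ‖(g : Matrix (Fin 2) (Fin 2) F) 0 1‖ ≤ ‖ϖ‖ ^ k ∧
       ‖(g : Matrix (Fin 2) (Fin 2) F) 1 0‖ ≤ ‖ϖ‖ ^ (k - 1) ∧
       ‖(g : Matrix (Fin 2) (Fin 2) F) 1 1 - 1‖ ≤ ‖ϖ‖ ^ k}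

/-- The explicit description of `G_{v₁}(k)`: matrices
`[[1+ϖ^k a, ϖ^{k+1} b],[ϖ^{k-1} c, 1+ϖ^k d]]` with `a,b,c,d ∈ 𝒪`. -/
def Gv1ex (F : Type*) [NormedField F] (ϖ : F) (k : ℕ) : Set (GL (Fin 2) F) :=
  {g | ‖(g : Matrix (Fin 2) (Fin 2) F) 0 0 - 1‖ ≤ ‖ϖ‖ ^ k ∧
       ‖(g : Matrix (Fin 2) (Fin 2) F) 0 1‖ ≤ ‖ϖ‖ ^ (k + 1) ∧
       ‖(g : Matrix (Fin 2) (Fin 2) F) 1 0‖ ≤ ‖ϖ‖ ^ (k - 1) ∧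
       ‖(g : Matrix (Fin 2) (Fin 2) F) 1 1 - 1‖ ≤ ‖ϖ‖ ^ k}

open scoped Classical in
/-- The right Möbius action of `g = [[a,b],[c,d]]` on `ℙ¹(F) = F ∪ {∞}` (here modelled as
`Option F`, with `none = ∞`): `z·g = (az+c)/(bz+d)`, `∞·g = a/b`, with value `∞` when the
denominator vanishes. -/
def moeb (F : Type*) [Field F] (g : Matrix (Fin 2) (Fin 2) F) : Option F → Option F
  | Option.some z => if g 0 1 * z + g 1 1 = 0 then Option.none
      else Option.some ((g 0 0 * z + g 1 0) / (g 0 1 * z + g 1 1))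
  | Option.none => if g 0 1 = 0 then Option.none else Option.some (g 0 0 / g 0 1)

/-- The orbit of `z ∈ ℙ¹(F)` under a set `S` of elements of `GL₂(F)` acting on the right by
Möbius transformations. -/
def orb (F : Type*) [Field F] (S : Set (GL (Fin 2) F)) (z : Option F) : Set (Option F) :=
  {w | ∃ g ∈ S, moeb F (g : Matrix (Fin 2) (Fin 2) F) z = w}

/-- `D` is an orbit of `S` on `ℙ¹(F)`. -/
def IsOrbit (F : Type*) [Field F] (S : Set (GL (Fin 2) F)) (D : Set (Option F)) : Prop :=
  ∃ z, D = orb F S z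

/-- The region `B_w(∞, |ϖ|) = {w ∈ ℙ¹(F) : |1/w| ≤ |ϖ|} = {|w| ≥ |ϖ|⁻¹} ∪ {∞}`. -/
def regionInfty (F : Type*) [NormedField F] (ϖ : F) : Set (Option F) :=
  {w | w = Option.none ∨ ∃ z : F, w = Option.some z ∧ ‖ϖ‖⁻¹ ≤ ‖z‖}

/-- The coordinate `1/w` on `ℙ¹(F)`, with `1/∞ = 0`. -/
def invc (F : Type*) [Field F] : Option F → F
  | Option.none => 0
  | Option.some z => z⁻¹

/-- The residue field of `F` has cardinality `q`: there are exactly `q` classes in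
`𝒪/(ϖ)`, witnessed by a set of representatives. -/
def ResidueCard (F : Type*) [NormedField F] (ϖ : F) (q : ℕ) : Prop :=
  ∃ s : Finset F, s.card = q ∧ (∀ x ∈ s, ‖x‖ ≤ 1) ∧
    ∀ x : F, ‖x‖ ≤ 1 → ∃! y, y ∈ s ∧ ‖x - y‖ ≤ ‖ϖ‖

/-- The conjugate `h S h⁻¹` of a set of matrices. -/
def conjSet (F : Type*) [Field F] (h : GL (Fin 2) F) (S : Set (GL (Fin 2) F)) :
    Set (GL (Fin 2) F) :=
  (fun g => h * g * h⁻¹) '' S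

/-- The matrix `g_α = [[1,0],[α,ϖ]]` as an element of `GL₂(F)`. -/
def galpha (F : Type*) [Field F] (ϖ α : F) (h : ϖ ≠ 0) : GL (Fin 2) F :=
  Matrix.GeneralLinearGroup.mkOfDetNeZero !![1, 0; α, ϖ]
    (by simpa [Matrix.det_fin_two_of] using h)

/-- The diagonal matrix `diag(1, ϖ^n)` as an element of `GL₂(F)`. -/
def dmatN (F : Type*) [Field F] (ϖ : F) (h : ϖ ≠ 0) (n : ℕ) : GL (Fin 2) F :=
  Matrix.GeneralLinearGroup.mkOfDetNeZero !![1, 0; 0, ϖ ^ n]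
    (by simpa [Matrix.det_fin_two_of] using pow_ne_zero n h)

/-!
Every `g ∈ H` has a unit upper-left entry `A`, so `g` factors as the lower unipotent matrix
`[[1, 0], [C/A, 1]]`, which lies in `G_{v₁}(k)` because `‖C/A‖ ≤ ‖ϖ‖^(k-1)`, times an upper
triangular matrix in `G_{v₀}(k)`. Conversely `H` is a group containing both generating sets,
since by the ultrametric inequality a box of entry bounds `(a, b, c, a)` around the identity is
closed under products and inverses as soon as `b c ≤ a < 1`.
-/

namespace IsUltrametricDist

variable {F : Type*} [NormedField F] [IsUltrametricDist F] {x y : F} {t : ℝ}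

lemma norm_add_le_of_le (hx : ‖x‖ ≤ t) (hy : ‖y‖ ≤ t) : ‖x + y‖ ≤ t :=
  (norm_add_le_max x y).trans (max_le hx hy)

lemma norm_sub_le_of_le (hx : ‖x‖ ≤ t) (hy : ‖y‖ ≤ t) : ‖x - y‖ ≤ t := by
  rw [sub_eq_add_neg]
  exact IsUltrametricDist.norm_add_le_of_le hx (by rwa [norm_neg])

lemma norm_le_one_of_norm_sub_one_le_one (h : ‖x - 1‖ ≤ 1) : ‖x‖ ≤ 1 := by
  simpa using IsUltrametricDist.norm_add_le_of_le h norm_one.le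

lemma norm_eq_one_of_norm_sub_one_lt_one (h : ‖x - 1‖ < 1) : ‖x‖ = 1 := by
  have := norm_add_eq_max_of_norm_ne_norm (h.trans_eq norm_one.symm).ne
  simpa [max_eq_right h.le] using this

end IsUltrametricDist

open IsUltrametricDist

def lowerUnipotent {R : Type*} [CommRing R] (c : R) : GL (Fin 2) R :=
  ⟨!![1, 0; c, 1], !![1, 0; -c, 1], by simp [one_fin_two], by simp [one_fin_two]⟩

/-- `Gv0 F ϖ k` and `Ge F ϖ k` are, definitionally, `entryBox F (‖ϖ‖ ^ k) (‖ϖ‖ ^ k) c` with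
`c = ‖ϖ‖ ^ k` and `c = ‖ϖ‖ ^ (k - 1)` respectively. -/
def entryBox (F : Type*) [NormedField F] (a b c : ℝ) : Set (GL (Fin 2) F) :=
  {g | ‖g.val 0 0 - 1‖ ≤ a ∧ ‖g.val 0 1‖ ≤ b ∧ ‖g.val 1 0‖ ≤ c ∧ ‖g.val 1 1 - 1‖ ≤ a}

section EntryBox

variable {F : Type*} [NormedField F] {a b c a' b' c' : ℝ}

lemma entryBox_mono (ha : a ≤ a') (hb : b ≤ b') (hc : c ≤ c') :
    entryBox F a b c ⊆ entryBox F a' b' c' :=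
  fun _ ⟨h₀₀, h₀₁, h₁₀, h₁₁⟩ ↦ ⟨h₀₀.trans ha, h₀₁.trans hb, h₁₀.trans hc, h₁₁.trans ha⟩

lemma one_mem_entryBox (ha : 0 ≤ a) (hb : 0 ≤ b) (hc : 0 ≤ c) :
    (1 : GL (Fin 2) F) ∈ entryBox F a b c := by
  simp [entryBox, ha, hb, hc]

variable [IsUltrametricDist F]

lemma mul_mem_entryBox (ha : a ≤ 1) (hbc : b * c ≤ a) {g h : GL (Fin 2) F}
    (hg : g ∈ entryBox F a b c) (hh : h ∈ entryBox F a b c) : g * h ∈ entryBox F a b c := by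
  obtain ⟨hg₀₀, hg₀₁, hg₁₀, hg₁₁⟩ := hg
  obtain ⟨hh₀₀, hh₀₁, hh₁₀, hh₁₁⟩ := hh
  have hA := norm_le_one_of_norm_sub_one_le_one (hg₀₀.trans ha)
  have hD := norm_le_one_of_norm_sub_one_le_one (hg₁₁.trans ha)
  have hA' := norm_le_one_of_norm_sub_one_le_one (hh₀₀.trans ha)
  have hD' := norm_le_one_of_norm_sub_one_le_one (hh₁₁.trans ha)
  have hcb : c * b ≤ a := by rwa [mul_comm]
  simp only [entryBox, Set.mem_ofPred_eq, Matrix.GeneralLinearGroup.coe_mul, Matrix.mul_apply,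
    Fin.sum_univ_two]
  refine ⟨?_, ?_, ?_, ?_⟩
  · rw [show g.val 0 0 * h.val 0 0 + g.val 0 1 * h.val 1 0 - 1 =
        (g.val 0 0 - 1) * h.val 0 0 + (h.val 0 0 - 1) + g.val 0 1 * h.val 1 0 by ring]
    refine IsUltrametricDist.norm_add_le_of_le (IsUltrametricDist.norm_add_le_of_le ?_ hh₀₀) ?_
    · simpa using norm_mul_le_of_le hg₀₀ hA'
    · exact (norm_mul_le_of_le hg₀₁ hh₁₀).trans hbc
  · refine IsUltrametricDist.norm_add_le_of_le ?_ ?_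
    · simpa using norm_mul_le_of_le hA hh₀₁
    · simpa using norm_mul_le_of_le hg₀₁ hD'
  · refine IsUltrametricDist.norm_add_le_of_le ?_ ?_
    · simpa using norm_mul_le_of_le hg₁₀ hA'
    · simpa using norm_mul_le_of_le hD hh₁₀
  · rw [show g.val 1 0 * h.val 0 1 + g.val 1 1 * h.val 1 1 - 1 =
        (g.val 1 1 - 1) * h.val 1 1 + (h.val 1 1 - 1) + g.val 1 0 * h.val 0 1 by ring]
    refine IsUltrametricDist.norm_add_le_of_le (IsUltrametricDist.norm_add_le_of_le ?_ hh₁₁) ?_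
    · simpa using norm_mul_le_of_le hg₁₁ hD'
    · exact (norm_mul_le_of_le hg₁₀ hh₀₁).trans hcb

lemma inv_mem_entryBox (ha : a < 1) (hbc : b * c ≤ a) {g : GL (Fin 2) F}
    (hg : g ∈ entryBox F a b c) : g⁻¹ ∈ entryBox F a b c := by
  obtain ⟨hg₀₀, hg₀₁, hg₁₀, hg₁₁⟩ := hg
  have hD := norm_le_one_of_norm_sub_one_le_one (hg₁₁.trans ha.le)
  set Δ := g.val.det with hΔ_def
  have hΔ : ‖Δ - 1‖ ≤ a := by
    rw [show Δ - 1 = (g.val 0 0 - 1) * g.val 1 1 + (g.val 1 1 - 1) - g.val 0 1 * g.val 1 0 by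
      rw [hΔ_def, Matrix.det_fin_two]; ring]
    refine IsUltrametricDist.norm_sub_le_of_le (IsUltrametricDist.norm_add_le_of_le ?_ hg₁₁) ?_
    · simpa using norm_mul_le_of_le hg₀₀ hD
    · exact (norm_mul_le_of_le hg₀₁ hg₁₀).trans hbc
  have hΔ_one : ‖Δ‖ = 1 := norm_eq_one_of_norm_sub_one_lt_one (hΔ.trans_lt ha)
  have hΔ₀ : Δ ≠ 0 := norm_ne_zero_iff.mp (hΔ_one ▸ one_ne_zero)
  have hΔ_inv : ‖Δ⁻¹‖ = 1 := by rw [norm_inv, hΔ_one, inv_one]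
  have hinv : (g⁻¹).val = Δ⁻¹ • !![g.val 1 1, -g.val 0 1; -g.val 1 0, g.val 0 0] := by
    rw [Matrix.GeneralLinearGroup.coe_inv, Matrix.inv_def, Matrix.adjugate_fin_two,
      Ring.inverse_eq_inv]
  have hdiag {x : F} (hx : ‖x - 1‖ ≤ a) : ‖Δ⁻¹ * x - 1‖ ≤ a := by
    rw [show Δ⁻¹ * x - 1 = Δ⁻¹ * ((x - 1) - (Δ - 1)) by field_simp; ring, norm_mul, hΔ_inv,
      one_mul]
    exact IsUltrametricDist.norm_sub_le_of_le hx hΔ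
  simp only [entryBox, Set.mem_ofPred_eq, hinv, Matrix.smul_apply, smul_eq_mul, Matrix.of_apply,
    Matrix.cons_val', Matrix.cons_val_zero, Matrix.cons_val_one, Matrix.empty_val',
    Matrix.cons_val_fin_one, norm_mul, norm_neg, hΔ_inv, one_mul]
  exact ⟨hdiag hg₁₁, hg₀₁, hg₁₀, hdiag hg₀₀⟩

def entryBoxSubgroup (hb : 0 ≤ b) (hc : 0 ≤ c) (hbc : b * c ≤ a) (ha : a < 1) :
    Subgroup (GL (Fin 2) F) where
  carrier := entryBox F a b c
  one_mem' := one_mem_entryBox ((mul_nonneg hb hc).trans hbc) hb hc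
  mul_mem' := mul_mem_entryBox ha.le hbc
  inv_mem' := inv_mem_entryBox ha hbc

end EntryBox

section LowerUnipotent

variable {F : Type*} [NormedField F] {a b c : ℝ}

lemma lowerUnipotent_mem_entryBox (ha : 0 ≤ a) (hb : 0 ≤ b) {x : F} (hx : ‖x‖ ≤ c) :
    lowerUnipotent x ∈ entryBox F a b c := by
  simp [entryBox, lowerUnipotent, ha, hb, hx]

variable [IsUltrametricDist F]

lemma norm_div_le_of_mem_entryBox (ha : a < 1) {g : GL (Fin 2) F}
    (hg : g ∈ entryBox F a b c) : ‖g.val 1 0 / g.val 0 0‖ ≤ c := by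
  rw [norm_div, norm_eq_one_of_norm_sub_one_lt_one (hg.1.trans_lt ha), div_one]
  exact hg.2.2.1

lemma inv_lowerUnipotent_mul_mem_entryBox (ha : a < 1) (hbc : b * c ≤ a) {g : GL (Fin 2) F}
    (hg : g ∈ entryBox F a b c) :
    (lowerUnipotent (g.val 1 0 / g.val 0 0))⁻¹ * g ∈ entryBox F a b 0 := by
  have hA₀ : g.val 0 0 ≠ 0 :=
    norm_ne_zero_iff.mp ((norm_eq_one_of_norm_sub_one_lt_one (hg.1.trans_lt ha)).symm ▸ one_ne_zero)
  have hx := norm_div_le_of_mem_entryBox ha hg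
  obtain ⟨hg₀₀, hg₀₁, -, hg₁₁⟩ := hg
  have hinv : ((lowerUnipotent (g.val 1 0 / g.val 0 0))⁻¹).val =
      !![1, 0; -(g.val 1 0 / g.val 0 0), 1] := rfl
  simp only [entryBox, Set.mem_ofPred_eq, Matrix.GeneralLinearGroup.coe_mul, hinv,
    Matrix.mul_apply, Fin.sum_univ_two, Matrix.of_apply, Matrix.cons_val', Matrix.cons_val_zero,
    Matrix.cons_val_one, Matrix.empty_val', Matrix.cons_val_fin_one]
  refine ⟨by simpa using hg₀₀, by simpa using hg₀₁, by field_simp; simp, ?_⟩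
  rw [show -(g.val 1 0 / g.val 0 0) * g.val 0 1 + 1 * g.val 1 1 - 1 =
      (g.val 1 1 - 1) - g.val 1 0 / g.val 0 0 * g.val 0 1 by ring]
  exact IsUltrametricDist.norm_sub_le_of_le hg₁₁
    ((norm_mul_le_of_le hx hg₀₁).trans (by rwa [mul_comm]))

end LowerUnipotent

section Uniformizer

variable {F : Type*} [NormedField F] {ϖ : F} {k : ℕ}

lemma coe_dmat_conj (hϖ : ϖ ≠ 0) (g : GL (Fin 2) F) :
    (dmat F ϖ hϖ * g * (dmat F ϖ hϖ)⁻¹).val =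
      !![g.val 0 0, ϖ * g.val 0 1; g.val 1 0 / ϖ, g.val 1 1] := by
  have hinv : ((dmat F ϖ hϖ)⁻¹).val = !![ϖ⁻¹, 0; 0, 1] := by
    rw [Matrix.GeneralLinearGroup.coe_inv]
    refine Matrix.inv_eq_right_inv ?_
    simp [dmat, one_fin_two, hϖ]
  rw [Matrix.GeneralLinearGroup.coe_mul, Matrix.GeneralLinearGroup.coe_mul, hinv,
    Matrix.eta_fin_two g.val]
  simp [dmat, mul_comm ϖ, hϖ, div_eq_mul_inv]

lemma dmat_conj_mem_entryBox (hϖ : ϖ ≠ 0) {a b c : ℝ} {g : GL (Fin 2) F}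
    (hg : g ∈ entryBox F a b c) :
    dmat F ϖ hϖ * g * (dmat F ϖ hϖ)⁻¹ ∈ entryBox F a (‖ϖ‖ * b) (c / ‖ϖ‖) := by
  obtain ⟨hg₀₀, hg₀₁, hg₁₀, hg₁₁⟩ := hg
  simp only [entryBox, Set.mem_ofPred_eq]
  rw [coe_dmat_conj hϖ]
  simp only [Matrix.of_apply, Matrix.cons_val', Matrix.cons_val_zero, Matrix.cons_val_one,
    Matrix.empty_val', Matrix.cons_val_fin_one, norm_mul, norm_div]
  exact ⟨hg₀₀, mul_le_mul_of_nonneg_left hg₀₁ (norm_nonneg ϖ),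
    div_le_div_of_nonneg_right hg₁₀ (norm_nonneg ϖ), hg₁₁⟩

lemma lowerUnipotent_eq_dmat_conj (hϖ : ϖ ≠ 0) (x : F) :
    lowerUnipotent x = dmat F ϖ hϖ * lowerUnipotent (ϖ * x) * (dmat F ϖ hϖ)⁻¹ := by
  ext : 1
  rw [coe_dmat_conj hϖ]
  simp [lowerUnipotent, mul_comm ϖ x, hϖ]

lemma Gv0_subset_Ge (hϖ₁ : ‖ϖ‖ ≤ 1) : Gv0 F ϖ k ⊆ Ge F ϖ k :=
  entryBox_mono le_rfl le_rfl (pow_le_pow_of_le_one (norm_nonneg ϖ) hϖ₁ (Nat.sub_le k 1))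

lemma Gv1_subset_Ge (hϖ : ϖ ≠ 0) (hϖ₁ : ‖ϖ‖ ≤ 1) (hk : 1 ≤ k) : Gv1 F ϖ hϖ k ⊆ Ge F ϖ k := by
  rintro _ ⟨g, hg, rfl⟩
  refine entryBox_mono le_rfl ?_ ?_ (dmat_conj_mem_entryBox hϖ hg)
  · exact mul_le_of_le_one_left (by positivity) hϖ₁
  · rw [pow_sub₀ _ (norm_ne_zero_iff.mpr hϖ) hk, pow_one, div_eq_mul_inv]

lemma lowerUnipotent_mem_Gv1 (hϖ : ϖ ≠ 0) (hk : 1 ≤ k) {x : F} (hx : ‖x‖ ≤ ‖ϖ‖ ^ (k - 1)) :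
    lowerUnipotent x ∈ Gv1 F ϖ hϖ k := by
  refine ⟨lowerUnipotent (ϖ * x), lowerUnipotent_mem_entryBox (by positivity) (by positivity) ?_,
    (lowerUnipotent_eq_dmat_conj hϖ x).symm⟩
  rw [norm_mul, ← pow_sub_one_mul (by omega : k ≠ 0), mul_comm]
  exact mul_le_mul_of_nonneg_right hx (norm_nonneg ϖ)

end Uniformizer

theorem statement0_general (F : Type*) [NontriviallyNormedField F]
    [IsUltrametricDist F]
    (ϖ : F) (hϖ : IsUniformizer F ϖ) (k : ℕ) (hk : 1 ≤ k) :
    ((Subgroup.closure (Gv0 F ϖ k ∪ Gv1 F ϖ hϖ.1 k) : Subgroup (GL (Fin 2) F)) :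
      Set (GL (Fin 2) F)) = Ge F ϖ k := by
  have hϖ₁ : ‖ϖ‖ < 1 := hϖ.2.1
  have hbc : ‖ϖ‖ ^ k * ‖ϖ‖ ^ (k - 1) ≤ ‖ϖ‖ ^ k :=
    mul_le_of_le_one_right (by positivity) (pow_le_one₀ (norm_nonneg ϖ) hϖ₁.le)
  have ha : ‖ϖ‖ ^ k < 1 := pow_lt_one₀ (norm_nonneg ϖ) hϖ₁ (by omega)
  refine subset_antisymm ?_ fun g hg ↦ ?_
  · exact (Subgroup.closure_le (entryBoxSubgroup (by positivity) (by positivity) hbc ha)).mpr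
      (Set.union_subset (Gv0_subset_Ge hϖ₁.le) (Gv1_subset_Ge hϖ.1 hϖ₁.le hk))
  · rw [← mul_inv_cancel_left (lowerUnipotent (g.val 1 0 / g.val 0 0)) g]
    exact mul_mem
      (Subgroup.subset_closure (Or.inr (lowerUnipotent_mem_Gv1 hϖ.1 hk
        (norm_div_le_of_mem_entryBox ha hg))))
      (Subgroup.subset_closure (Or.inl (entryBox_mono le_rfl le_rfl (by positivity)
        (inv_lowerUnipotent_mul_mem_entryBox ha hbc hg))))

theorem statement0 (p : ℕ) [Fact p.Prime] (F : Type*) [NontriviallyNormedField F]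
    [IsUltrametricDist F] [NormedAlgebra ℚ_[p] F] [FiniteDimensional ℚ_[p] F]
    (ϖ : F) (hϖ : IsUniformizer F ϖ) (k : ℕ) (hk : 1 ≤ k) :
    ((Subgroup.closure (Gv0 F ϖ k ∪ Gv1 F ϖ hϖ.1 k) : Subgroup (GL (Fin 2) F)) :
      Set (GL (Fin 2) F)) = Ge F ϖ k :=
  statement0_general F ϖ hϖ k hk
end
end

section
/- Consider the right Möbius action of GL_2(F) on P^1(F) where g = [[a,b],[c,d]] sends z to (az+c)/(bz+d). The orbits of the congruence subgroup G_{v0}(k) = {g ∈ GL_2(O) : g ≡ 1 mod ϖ^k} on the unit ball B_z(0,1) = {z ∈ F : |z| ≤ 1} are exactly the closed discs B_z(z_0, |ϖ|^k) = {z : |z − z_0| ≤ |ϖ|^k} for z_0 ∈ B_z(0,1). -/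
/-! For `g ≡ 1 mod ϖ^k` and `|z| ≤ 1` the denominator `bz + d` is `1` plus something of norm
`< 1`, hence has norm `1`, and `z·g - z = ((a-1)z + c - bz² - (d-1)z)/(bz + d)` has norm
`≤ |ϖ|^k` by the ultrametric inequality. Conversely the transvection `[[1,0],[w-z,1]]` lies in
the congruence subgroup and sends `z` to `w`. -/

open Matrix Pointwise
open scoped OnePoint

noncomputable section

lemma norm_mul_le_of_norm_le_one {R : Type*} [NonUnitalSeminormedRing R] {ε : ℝ} {x z : R}
    (hx : ‖x‖ ≤ ε) (hz : ‖z‖ ≤ 1) : ‖x * z‖ ≤ ε := by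
  simpa using norm_mul_le_of_le hx hz

namespace IsUltrametricDist

variable {E : Type*} [SeminormedAddGroup E] [IsUltrametricDist E]

lemma norm_add_le_of_norm_le {ε : ℝ} {x y : E} (hx : ‖x‖ ≤ ε) (hy : ‖y‖ ≤ ε) : ‖x + y‖ ≤ ε :=
  (norm_add_le_max x y).trans (max_le hx hy)

lemma norm_add_eq_left_of_norm_lt {x y : E} (h : ‖y‖ < ‖x‖) : ‖x + y‖ = ‖x‖ := by
  rw [norm_add_eq_max_of_norm_ne_norm h.ne', max_eq_left h.le]

end IsUltrametricDist

section Field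

variable {F : Type*} [Field F] {M : Matrix (Fin 2) (Fin 2) F} {z : F}

lemma moeb_some_of_ne_zero (h : M 0 1 * z + M 1 1 ≠ 0) :
    moeb F M (some z) = some ((M 0 0 * z + M 1 0) / (M 0 1 * z + M 1 1)) := by
  simp [moeb, h]

lemma moeb_transvection_one_zero (c : F) :
    moeb F (transvection 1 0 c) (some z) = some (z + c) := by
  simp [moeb, transvection, one_apply]

lemma moeb_sub_eq (h : M 0 1 * z + M 1 1 ≠ 0) :
    (M 0 0 * z + M 1 0) / (M 0 1 * z + M 1 1) - z =
      ((M 0 0 - 1) * z + (M 1 0 + (-(M 0 1 * z * z) + -((M 1 1 - 1) * z)))) /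
        (M 0 1 * z + M 1 1) := by
  rw [eq_div_iff h, sub_mul, div_mul_cancel₀ _ h]
  ring

end Field

section Ultrametric

open IsUltrametricDist

variable {F : Type*} [NormedField F] [IsUltrametricDist F] {ε : ℝ}
  {M : Matrix (Fin 2) (Fin 2) F} {z : F}

lemma norm_moeb_denom_eq_one (hε : ε < 1) (hb : ‖M 0 1‖ ≤ ε) (hd : ‖M 1 1 - 1‖ ≤ ε)
    (hz : ‖z‖ ≤ 1) : ‖M 0 1 * z + M 1 1‖ = 1 := by
  have hsmall : ‖M 0 1 * z + (M 1 1 - 1)‖ < ‖(1 : F)‖ := by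
    rw [norm_one]
    exact (norm_add_le_of_norm_le (norm_mul_le_of_norm_le_one hb hz) hd).trans_lt hε
  rw [show M 0 1 * z + M 1 1 = 1 + (M 0 1 * z + (M 1 1 - 1)) by ring,
    norm_add_eq_left_of_norm_lt hsmall, norm_one]

lemma norm_moeb_sub_le (ha : ‖M 0 0 - 1‖ ≤ ε) (hb : ‖M 0 1‖ ≤ ε) (hc : ‖M 1 0‖ ≤ ε)
    (hd : ‖M 1 1 - 1‖ ≤ ε) (hz : ‖z‖ ≤ 1) (hden : ‖M 0 1 * z + M 1 1‖ = 1) :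
    ‖(M 0 0 * z + M 1 0) / (M 0 1 * z + M 1 1) - z‖ ≤ ε := by
  rw [moeb_sub_eq (norm_ne_zero_iff.mp (by simp [hden])), norm_div, hden, div_one]
  refine norm_add_le_of_norm_le (norm_mul_le_of_norm_le_one ha hz)
    (norm_add_le_of_norm_le hc (norm_add_le_of_norm_le ?_ ?_)) <;> rw [norm_neg]
  · exact norm_mul_le_of_norm_le_one (norm_mul_le_of_norm_le_one hb hz) hz
  · exact norm_mul_le_of_norm_le_one hd hz

end Ultrametric

theorem statement5_general (F : Type*) [NontriviallyNormedField F]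
    [IsUltrametricDist F]
    (ϖ : F) (hϖ : IsUniformizer F ϖ) (k : ℕ) (hk : 1 ≤ k) :
    ∀ z₀ : F, ‖z₀‖ ≤ 1 →
      orb F (Gv0 F ϖ k) (Option.some z₀) =
        Option.some '' {z : F | ‖z - z₀‖ ≤ ‖ϖ‖ ^ k} := by
  intro z₀ hz₀
  have hε : ‖ϖ‖ ^ k < 1 := pow_lt_one₀ (norm_nonneg _) hϖ.2.1 (by omega)
  ext w
  constructor
  · rintro ⟨g, ⟨ha, hb, hc, hd⟩, rfl⟩
    have hden := norm_moeb_denom_eq_one hε hb hd hz₀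
    rw [moeb_some_of_ne_zero (norm_ne_zero_iff.mp (by simp [hden]))]
    exact ⟨_, norm_moeb_sub_le ha hb hc hd hz₀ hden, rfl⟩
  · rintro ⟨z, hz : ‖z - z₀‖ ≤ ‖ϖ‖ ^ k, rfl⟩
    refine ⟨GeneralLinearGroup.mkOfDetNeZero (transvection 1 0 (z - z₀))
      (by rw [det_transvection_of_ne _ _ (by decide)]; exact one_ne_zero), ?_, ?_⟩
    · simp [Gv0, transvection, one_apply, hz, pow_nonneg]
    · simp [moeb_transvection_one_zero]

theorem statement5 (p : ℕ) [Fact p.Prime] (F : Type*) [NontriviallyNormedField F]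
    [IsUltrametricDist F] [NormedAlgebra ℚ_[p] F] [FiniteDimensional ℚ_[p] F]
    (ϖ : F) (hϖ : IsUniformizer F ϖ) (k : ℕ) (hk : 1 ≤ k) :
    ∀ z₀ : F, ‖z₀‖ ≤ 1 →
      orb F (Gv0 F ϖ k) (Option.some z₀) =
        Option.some '' {z : F | ‖z - z₀‖ ≤ ‖ϖ‖ ^ k} :=
  statement5_general F ϖ hϖ k hk
end
end

section
/- For g = [[a,b],[c,d]] in G_{v1}(k) = diag(ϖ,1) G_{v0}(k) diag(ϖ,1)^{-1} (so a−1, d−1 ∈ ϖ^k O, b ∈ ϖ^{k+1} O, c ∈ ϖ^{k-1} O) and z_0 ∈ O, one has |z_0·g − z_0| ≤ |ϖ|^{k−1}, and the G_{v1}(k)-orbit of z_0 under the right Möbius action equals the disc {z ∈ F : |z − z_0| ≤ |ϖ|^{k−1}}. -/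
open Matrix Pointwise
open scoped OnePoint

noncomputable section

theorem statement6 (p : ℕ) [Fact p.Prime] (F : Type*) [NontriviallyNormedField F]
    [IsUltrametricDist F] [NormedAlgebra ℚ_[p] F] [FiniteDimensional ℚ_[p] F]
    (ϖ : F) (hϖ : IsUniformizer F ϖ) (k : ℕ) (hk : 1 ≤ k) :
    (∀ g ∈ Gv1ex F ϖ k, ∀ z₀ : F, ‖z₀‖ ≤ 1 →
      ∃ w : F, moeb F (g : Matrix (Fin 2) (Fin 2) F) (Option.some z₀) = Option.some w ∧
        ‖w - z₀‖ ≤ ‖ϖ‖ ^ (k - 1)) ∧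
    (∀ z₀ : F, ‖z₀‖ ≤ 1 →
      orb F (Gv1ex F ϖ k) (Option.some z₀) =
        Option.some '' {z : F | ‖z - z₀‖ ≤ ‖ϖ‖ ^ (k - 1)}) := by
  obtain ⟨hϖ0, hϖ1, -⟩ := hϖ
  have ht0 : (0:ℝ) < ‖ϖ‖ := norm_pos_iff.mpr hϖ0
  have hkk : ‖ϖ‖ ^ k ≤ ‖ϖ‖ ^ (k - 1) :=
    pow_le_pow_of_le_one ht0.le hϖ1.le (Nat.sub_le k 1)
  have hkk1 : ‖ϖ‖ ^ (k+1) ≤ ‖ϖ‖ ^ (k - 1) :=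
    pow_le_pow_of_le_one ht0.le hϖ1.le (by omega)
  have hk1 : ‖ϖ‖ ^ k < 1 := pow_lt_one₀ ht0.le hϖ1 (by omega)
  have part1 : ∀ g ∈ Gv1ex F ϖ k, ∀ z₀ : F, ‖z₀‖ ≤ 1 →
      ∃ w : F, moeb F (g : Matrix (Fin 2) (Fin 2) F) (Option.some z₀) = Option.some w ∧
        ‖w - z₀‖ ≤ ‖ϖ‖ ^ (k - 1) := by
    intro g hg z₀ hz₀
    obtain ⟨h00, h01, h10, h11⟩ := hg
    set M : Matrix (Fin 2) (Fin 2) F := (g : Matrix (Fin 2) (Fin 2) F) with hM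
    set D : F := M 0 1 * z₀ + M 1 1 with hD
    have hb : ‖M 0 1 * z₀‖ ≤ ‖ϖ‖ ^ (k+1) := by
      calc ‖M 0 1 * z₀‖ = ‖M 0 1‖ * ‖z₀‖ := norm_mul _ _
        _ ≤ ‖ϖ‖ ^ (k+1) * 1 := by
            exact mul_le_mul h01 hz₀ (norm_nonneg _) (le_trans (norm_nonneg _) h01)
        _ = ‖ϖ‖ ^ (k+1) := mul_one _
    have hDm1 : ‖D - 1‖ < 1 := by
      have : D - 1 = M 0 1 * z₀ + (M 1 1 - 1) := by ring
      rw [this]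
      refine lt_of_le_of_lt (IsUltrametricDist.norm_add_le_max _ _) ?_
      refine max_lt (lt_of_le_of_lt hb ?_) (lt_of_le_of_lt h11 hk1)
      exact pow_lt_one₀ ht0.le hϖ1 (by omega)
    have hDnorm : ‖D‖ = 1 := by
      have h1 : D = 1 + (D - 1) := by ring
      rw [h1, IsUltrametricDist.norm_add_eq_max_of_norm_ne_norm
        (by rw [norm_one]; exact fun h => absurd hDm1 (by rw [← h]; simp))]
      rw [norm_one, max_eq_left hDm1.le]
    have hDne : D ≠ 0 := by
      intro h; rw [h, norm_zero] at hDnorm; norm_num at hDnorm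
    refine ⟨(M 0 0 * z₀ + M 1 0) / D, ?_, ?_⟩
    · simp only [moeb, ← hD]
      rw [if_neg hDne]
    · have hnum : (M 0 0 * z₀ + M 1 0) / D - z₀
          = ((M 0 0 - 1) * z₀ + (M 1 0 - M 0 1 * z₀ * z₀ - (M 1 1 - 1) * z₀)) / D := by
        field_simp
        ring
      rw [hnum, norm_div, hDnorm, div_one]
      refine le_trans (IsUltrametricDist.norm_add_le_max _ _) (max_le ?_ ?_)
      · calc ‖(M 0 0 - 1) * z₀‖ = ‖M 0 0 - 1‖ * ‖z₀‖ := norm_mul _ _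
          _ ≤ ‖ϖ‖ ^ k * 1 :=
              mul_le_mul h00 hz₀ (norm_nonneg _) (le_trans (norm_nonneg _) h00)
          _ ≤ ‖ϖ‖ ^ (k-1) := by rw [mul_one]; exact hkk
      · have e1 : M 1 0 - M 0 1 * z₀ * z₀ - (M 1 1 - 1) * z₀
            = M 1 0 + (-(M 0 1 * z₀ * z₀) + (-((M 1 1 - 1) * z₀))) := by ring
        rw [e1]
        refine le_trans (IsUltrametricDist.norm_add_le_max _ _) (max_le h10 ?_)
        refine le_trans (IsUltrametricDist.norm_add_le_max _ _) (max_le ?_ ?_)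
        · rw [norm_neg]
          calc ‖M 0 1 * z₀ * z₀‖ = ‖M 0 1 * z₀‖ * ‖z₀‖ := norm_mul _ _
            _ ≤ ‖ϖ‖ ^ (k+1) * 1 :=
                mul_le_mul hb hz₀ (norm_nonneg _) (le_trans (norm_nonneg _) hb)
            _ ≤ ‖ϖ‖ ^ (k-1) := by rw [mul_one]; exact hkk1
        · rw [norm_neg]
          calc ‖(M 1 1 - 1) * z₀‖ = ‖M 1 1 - 1‖ * ‖z₀‖ := norm_mul _ _
            _ ≤ ‖ϖ‖ ^ k * 1 :=
                mul_le_mul h11 hz₀ (norm_nonneg _) (le_trans (norm_nonneg _) h11)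
            _ ≤ ‖ϖ‖ ^ (k-1) := by rw [mul_one]; exact hkk
  refine ⟨part1, ?_⟩
  intro z₀ hz₀
  ext w
  constructor
  · rintro ⟨g, hg, hw⟩
    obtain ⟨w', hw', hle⟩ := part1 g hg z₀ hz₀
    rw [hw] at hw'
    exact ⟨w', hle, hw'.symm⟩
  · rintro ⟨z, hz, rfl⟩
    set gm : GL (Fin 2) F := Matrix.GeneralLinearGroup.mkOfDetNeZero !![1, 0; z - z₀, 1]
      (by simp [Matrix.det_fin_two_of]) with hgm
    have hcoe : (gm : Matrix (Fin 2) (Fin 2) F) = !![1, 0; z - z₀, 1] := rfl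
    refine ⟨gm, ?_, ?_⟩
    · refine ⟨?_, ?_, ?_, ?_⟩ <;> rw [hcoe] <;>
        simp [Matrix.cons_val_zero, Matrix.cons_val_one] <;>
        first
          | positivity
          | exact hz
    · show moeb F _ (Option.some z₀) = _
      rw [hcoe]
      simp only [moeb, Matrix.cons_val', Matrix.cons_val_zero, Matrix.cons_val_one,
        Matrix.head_cons, Matrix.empty_val', Matrix.cons_val_fin_one, Matrix.head_fin_const]
      rw [if_neg (by norm_num)]
      norm_num
end
end

section
/- For g = [[a,b],[c,d]] in G_{v1}(k) and w_0 ∈ P^1(F) with |w_0| ≥ |ϖ|^{-1} (or w_0 = ∞), one has |1/(w_0·g) − 1/w_0| ≤ |ϖ|^{k+1}, where 1/∞ := 0; hence the G_{v1}(k)-orbits on the region {|w| ≥ |ϖ|^{-1}} ∪ {∞} are discs of radius |ϖ|^{k+1} in the coordinate 1/w. -/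
open Matrix Pointwise
open scoped OnePoint

noncomputable section

/-! In the coordinate `t = 1/w` the region `regionInfty` is the disc `‖t‖ ≤ ‖ϖ‖`, and
`g = [[a, b], [c, d]]` acts by `t ↦ (b + d t) / (a + c t)`. For `g ∈ G_{v₁}(k)` the denominator
`a + c t` has norm `1`, and the displacement has numerator `b + (d - a) t - c t²`, whose three
terms all have norm at most `‖ϖ‖^(k+1)`; the ultrametric inequality bounds their sum. Conversely
the unipotent `[[1, β], [0, 1]]` lies in `G_{v₁}(k)` when `‖β‖ ≤ ‖ϖ‖^(k+1)` and translates `t`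
by `β`, so the orbit fills the whole disc. -/

section InvCoordinate

variable {F : Type*} [Field F]

lemma invc_injOn : Set.InjOn (invc F) {w | w ≠ some 0} := by
  rintro (_ | z) hz (_ | y) hy h
  · rfl
  · exact absurd h.symm (inv_ne_zero fun h0 => hy (by rw [h0]))
  · exact absurd h (inv_ne_zero fun h0 => hz (by rw [h0]))
  · exact congrArg some (inv_injective h)

lemma invc_moeb (g : Matrix (Fin 2) (Fin 2) F) {w : Option F} (hw : w ≠ some 0) :
    invc F (moeb F g w) = (g 0 1 + g 1 1 * invc F w) / (g 0 0 + g 1 0 * invc F w) := by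
  rcases w with _ | z
  · by_cases hb : g 0 1 = 0 <;> simp [moeb, invc, hb]
  · have hz : z ≠ 0 := fun h0 => hw (by rw [h0])
    have hscale : (g 0 1 + g 1 1 * z⁻¹) / (g 0 0 + g 1 0 * z⁻¹)
        = (g 0 1 * z + g 1 1) / (g 0 0 * z + g 1 0) := by
      rw [← mul_div_mul_right _ _ hz]
      congr 1 <;> field_simp
    by_cases hden : g 0 1 * z + g 1 1 = 0 <;> simp [moeb, invc, hden, hscale]

lemma moeb_ne_some_zero (g : Matrix (Fin 2) (Fin 2) F) {w : Option F} (hw : w ≠ some 0)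
    (h : g 0 0 + g 1 0 * invc F w ≠ 0) : moeb F g w ≠ some 0 := by
  rcases w with _ | z
  · by_cases hb : g 0 1 = 0 <;> simp_all [moeb, invc]
  · have hz : z ≠ 0 := fun h0 => hw (by rw [h0])
    have hnum : g 0 0 * z + g 1 0 ≠ 0 := by
      have hscale : g 0 0 + g 1 0 * z⁻¹ = (g 0 0 * z + g 1 0) / z := by field_simp
      rw [invc, hscale] at h
      exact (div_ne_zero_iff.mp h).1
    by_cases hden : g 0 1 * z + g 1 1 = 0 <;> simp [moeb, hden, hnum]

end InvCoordinate

lemma mem_regionInfty_iff {F : Type*} [NormedField F] {ϖ : F} (hϖ : ϖ ≠ 0) {w : Option F} :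
    w ∈ regionInfty F ϖ ↔ w ≠ some 0 ∧ ‖invc F w‖ ≤ ‖ϖ‖ := by
  rcases w with _ | z
  · simp [regionInfty, invc]
  · by_cases hz : z = 0
    · simp [regionInfty, hz, hϖ]
    · simp [regionInfty, invc, hz, inv_le_comm₀ (norm_pos_iff.mpr hz) (norm_pos_iff.mpr hϖ)]

section Ultrametric

variable {F : Type*} [NormedField F] [IsUltrametricDist F]

lemma norm_eq_one_of_norm_sub_one_lt_one {a : F} (h : ‖a - 1‖ < 1) : ‖a‖ = 1 := by
  have hne : ‖(1 : F)‖ ≠ ‖a - 1‖ := by rw [norm_one]; exact h.ne'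
  rw [← add_sub_cancel (1 : F) a, IsUltrametricDist.norm_add_eq_max_of_norm_ne_norm hne,
    norm_one, max_eq_left h.le]

variable {ϖ : F} {k : ℕ} {g : GL (Fin 2) F}

lemma norm_denom_eq_one_of_mem_Gv1ex (hg : g ∈ Gv1ex F ϖ k) (hk : 1 ≤ k) (hϖ : ‖ϖ‖ < 1)
    {t : F} (ht : ‖t‖ ≤ ‖ϖ‖) : ‖g.1 0 0 + g.1 1 0 * t‖ = 1 := by
  obtain ⟨ha, -, hc, -⟩ := hg
  have hlt : ‖ϖ‖ ^ k < 1 := pow_lt_one₀ (norm_nonneg ϖ) hϖ (by omega)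
  have hct : ‖g.1 1 0 * t‖ ≤ ‖ϖ‖ ^ k := by
    rw [norm_mul, ← Nat.sub_add_cancel hk, pow_succ]
    exact mul_le_mul hc ht (norm_nonneg t) (by positivity)
  apply norm_eq_one_of_norm_sub_one_lt_one
  rw [add_sub_right_comm]
  exact (IsUltrametricDist.norm_add_le_max _ _).trans_lt
    (max_lt (ha.trans_lt hlt) (hct.trans_lt hlt))

lemma norm_moebius_sub_self_le_of_mem_Gv1ex (hg : g ∈ Gv1ex F ϖ k) (hk : 1 ≤ k) (hϖ : ‖ϖ‖ < 1)
    {t : F} (ht : ‖t‖ ≤ ‖ϖ‖) :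
    ‖(g.1 0 1 + g.1 1 1 * t) / (g.1 0 0 + g.1 1 0 * t) - t‖ ≤ ‖ϖ‖ ^ (k + 1) := by
  have hden := norm_denom_eq_one_of_mem_Gv1ex hg hk hϖ ht
  have hden0 : g.1 0 0 + g.1 1 0 * t ≠ 0 := norm_ne_zero_iff.mp (by rw [hden]; exact one_ne_zero)
  obtain ⟨ha, hb, hc, hd⟩ := hg
  have hda : ‖g.1 1 1 - g.1 0 0‖ ≤ ‖ϖ‖ ^ k := by
    rw [← sub_sub_sub_cancel_right _ _ (1 : F), sub_eq_add_neg]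
    exact (IsUltrametricDist.norm_add_le_max _ _).trans (max_le hd (by rwa [norm_neg]))
  have hlin : ‖(g.1 1 1 - g.1 0 0) * t‖ ≤ ‖ϖ‖ ^ (k + 1) := by
    rw [norm_mul, pow_succ]
    exact mul_le_mul hda ht (norm_nonneg t) (by positivity)
  have hquad : ‖g.1 1 0 * t ^ 2‖ ≤ ‖ϖ‖ ^ (k + 1) := by
    rw [norm_mul, norm_pow, show k + 1 = k - 1 + 2 by omega, pow_add]
    exact mul_le_mul hc (pow_le_pow_left₀ (norm_nonneg t) ht 2) (by positivity) (by positivity)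
  have hnum : (g.1 0 1 + g.1 1 1 * t) / (g.1 0 0 + g.1 1 0 * t) - t
      = (g.1 0 1 + (g.1 1 1 - g.1 0 0) * t - g.1 1 0 * t ^ 2) / (g.1 0 0 + g.1 1 0 * t) := by
    rw [eq_div_iff hden0, sub_mul, div_mul_cancel₀ _ hden0]
    ring
  rw [hnum, norm_div, hden, div_one, sub_eq_add_neg]
  refine (IsUltrametricDist.norm_add_le_max _ _).trans (max_le ?_ (by rwa [norm_neg]))
  exact (IsUltrametricDist.norm_add_le_max _ _).trans (max_le hb hlin)

theorem moeb_mem_regionInfty_of_mem_Gv1ex (hg : g ∈ Gv1ex F ϖ k) (hk : 1 ≤ k) (hϖ0 : ϖ ≠ 0)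
    (hϖ : ‖ϖ‖ < 1) {w : Option F} (hw : w ∈ regionInfty F ϖ) :
    moeb F g w ∈ regionInfty F ϖ ∧ ‖invc F (moeb F g w) - invc F w‖ ≤ ‖ϖ‖ ^ (k + 1) := by
  obtain ⟨hw0, ht⟩ := (mem_regionInfty_iff hϖ0).mp hw
  have hden0 : g.1 0 0 + g.1 1 0 * invc F w ≠ 0 :=
    norm_ne_zero_iff.mp (by rw [norm_denom_eq_one_of_mem_Gv1ex hg hk hϖ ht]; exact one_ne_zero)
  have hdist : ‖invc F (moeb F g w) - invc F w‖ ≤ ‖ϖ‖ ^ (k + 1) := by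
    rw [invc_moeb _ hw0]
    exact norm_moebius_sub_self_le_of_mem_Gv1ex hg hk hϖ ht
  refine ⟨(mem_regionInfty_iff hϖ0).mpr ⟨moeb_ne_some_zero _ hw0 hden0, ?_⟩, hdist⟩
  rw [← sub_add_cancel (invc F (moeb F g w)) (invc F w)]
  refine (IsUltrametricDist.norm_add_le_max _ _).trans (max_le ?_ ht)
  exact hdist.trans (pow_le_of_le_one (norm_nonneg ϖ) hϖ.le (by omega))

end Ultrametric

section Unipotent

open Matrix.GeneralLinearGroup

variable {F : Type*} [NormedField F]

lemma upperRightHom_mem_Gv1ex {ϖ β : F} {k : ℕ} (hβ : ‖β‖ ≤ ‖ϖ‖ ^ (k + 1)) :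
    upperRightHom β ∈ Gv1ex F ϖ k := by
  refine ⟨?_, ?_, ?_, ?_⟩ <;> simp [hβ]

lemma invc_moeb_upperRightHom (β : F) {w : Option F} (hw : w ≠ some 0) :
    invc F (moeb F (upperRightHom β) w) = β + invc F w := by
  simpa using invc_moeb (upperRightHom β).1 hw

end Unipotent

theorem statement7_general (F : Type*) [NontriviallyNormedField F] [IsUltrametricDist F]
    (ϖ : F) (hϖ : IsUniformizer F ϖ) (k : ℕ) (hk : 1 ≤ k) :
    (∀ g ∈ Gv1ex F ϖ k, ∀ w₀ ∈ regionInfty F ϖ,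
      moeb F (g : Matrix (Fin 2) (Fin 2) F) w₀ ∈ regionInfty F ϖ ∧
      ‖invc F (moeb F (g : Matrix (Fin 2) (Fin 2) F) w₀) - invc F w₀‖ ≤ ‖ϖ‖ ^ (k + 1)) ∧
    (∀ w₀ ∈ regionInfty F ϖ,
      orb F (Gv1ex F ϖ k) w₀ =
        {w | w ∈ regionInfty F ϖ ∧ ‖invc F w - invc F w₀‖ ≤ ‖ϖ‖ ^ (k + 1)}) := by
  obtain ⟨hϖ0, hϖ1, -⟩ := hϖ
  have hmaps : ∀ g ∈ Gv1ex F ϖ k, ∀ w₀ ∈ regionInfty F ϖ, _ :=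
    fun g hg w₀ hw₀ => moeb_mem_regionInfty_of_mem_Gv1ex hg hk hϖ0 hϖ1 hw₀
  refine ⟨hmaps, fun w₀ hw₀ => Set.ext fun w => ⟨?_, ?_⟩⟩
  · rintro ⟨g, hg, rfl⟩
    exact hmaps g hg w₀ hw₀
  · rintro ⟨hw, hdist⟩
    refine ⟨_, upperRightHom_mem_Gv1ex hdist, ?_⟩
    have hw₀0 := ((mem_regionInfty_iff hϖ0).mp hw₀).1
    refine invc_injOn (moeb_ne_some_zero _ hw₀0 (by simp)) ((mem_regionInfty_iff hϖ0).mp hw).1 ?_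
    rw [invc_moeb_upperRightHom _ hw₀0, sub_add_cancel]

theorem statement7 (p : ℕ) [Fact p.Prime] (F : Type*) [NontriviallyNormedField F]
    [IsUltrametricDist F] [NormedAlgebra ℚ_[p] F] [FiniteDimensional ℚ_[p] F]
    (ϖ : F) (hϖ : IsUniformizer F ϖ) (k : ℕ) (hk : 1 ≤ k) :
    (∀ g ∈ Gv1ex F ϖ k, ∀ w₀ ∈ regionInfty F ϖ,
      moeb F (g : Matrix (Fin 2) (Fin 2) F) w₀ ∈ regionInfty F ϖ ∧
      ‖invc F (moeb F (g : Matrix (Fin 2) (Fin 2) F) w₀) - invc F w₀‖ ≤ ‖ϖ‖ ^ (k + 1)) ∧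
    (∀ w₀ ∈ regionInfty F ϖ,
      orb F (Gv1ex F ϖ k) w₀ =
        {w | w ∈ regionInfty F ϖ ∧ ‖invc F w - invc F w₀‖ ≤ ‖ϖ‖ ^ (k + 1)}) :=
  statement7_general F ϖ hϖ k hk
end
end
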